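/- arXiv:2510.19315 — 3 statements merged into one kernel-verified Lean document; each statement's English description precedes it below -/
import Mathlib

section
/- For every finite alphabet Σ and every LTL formula φ over Σ (with strict since and strict until), there exists a nondeterministic finite automaton A with at most 2^{O(|φ|)} states such that A accepts exactly the finite words w with w,1 ⊨ φ. Consequently, if L(φ) is non-empty then φ is satisfied by some word of length at most 2^{O(|φ|)}. -/
/-- LTL formulas over alphabet `α`, with strict since and strict until. -/
inductive LTL (α : Type) : Type
  | tt : LTL α
  | ff : LTL α
  | atom : α → LTL α
  | not : LTL α → LTL α
  | and : LTL α → LTL α → LTL α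
  | or : LTL α → LTL α → LTL α
  | sinceOp : LTL α → LTL α → LTL α
  | untilOp : LTL α → LTL α → LTL α

/-- Satisfaction `w, i ⊨ φ` of an LTL formula on the finite word `w`
at the (1-based) position `i`. -/
def Sat {α : Type} (w : List α) : LTL α → ℕ → Prop
  | .tt, _ => True
  | .ff, _ => False
  | .atom a, i => w[i - 1]? = some a
  | .not φ, i => ¬ Sat w φ i
  | .and φ ψ, i => Sat w φ i ∧ Sat w ψ i
  | .or φ ψ, i => Sat w φ i ∨ Sat w ψ i
  | .sinceOp φ ψ, i =>
      ∃ j, 1 ≤ j ∧ j < i ∧ Sat w ψ j ∧ ∀ k, j < k → k < i → Sat w φ k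
  | .untilOp φ ψ, i =>
      ∃ j, i < j ∧ j ≤ w.length ∧ Sat w ψ j ∧ ∀ k, i < k → k < j → Sat w φ k

/-- Size of an LTL formula (number of subformula nodes). -/
def size {α : Type} : LTL α → ℕ
  | .tt => 1
  | .ff => 1
  | .atom _ => 1
  | .not φ => size φ + 1
  | .and φ ψ => size φ + size ψ + 1
  | .or φ ψ => size φ + size ψ + 1
  | .sinceOp φ ψ => size φ + size ψ + 1
  | .untilOp φ ψ => size φ + size ψ + 1

/-! Fischer–Ladner construction. An automaton guesses, at every position of the word, the set of
subformulas of `φ` holding there, and checks each guess against its letter and the guesses at the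
two neighbouring positions: Boolean connectives locally, strict since and until through their
one-step fixpoint laws `χ₁ S χ₂ ≡ Y (χ₂ ∨ χ₁ ∧ χ₁ S χ₂)` and `χ₁ U χ₂ ≡ X (χ₂ ∨ χ₁ ∧ χ₁ U χ₂)`.
A consistent sequence of guesses is unique (induction on the formula, running forward along the
word for since and backward for until), so it is the sequence of truth sets and the automaton
accepts exactly the models of `φ`. Keeping a window of two consecutive guesses as the state gives
`(2^|φ| + 1)^2` states, and cutting a loop out of an accepting run of a longer word yields a
shorter model. -/

namespace NFA

variable {α σ : Type*} {M : NFA α σ}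

theorem mem_evalFrom_iff_exists_run {S : Set σ} {w : List α} {q : σ} :
    q ∈ M.evalFrom S w ↔ ∃ r : ℕ → σ, r 0 ∈ S ∧
      (∀ i (hi : i < w.length), r (i + 1) ∈ M.step (r i) w[i]) ∧ r w.length = q := by
  induction w generalizing S with
  | nil => exact ⟨fun h => ⟨fun _ => q, h, by simp, rfl⟩, fun ⟨r, h0, _, hr⟩ => hr ▸ h0⟩
  | cons a w ih =>
    rw [evalFrom_cons, ih]
    constructor
    · rintro ⟨r, h0, hstep, hr⟩
      obtain ⟨s, hs, hs'⟩ := mem_stepSet.1 h0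
      refine ⟨fun | 0 => s | i + 1 => r i, hs, fun i hi => ?_, hr⟩
      cases i with
      | zero => exact hs'
      | succ i => exact hstep i (by simpa using hi)
    · rintro ⟨r, h0, hstep, hr⟩
      exact ⟨fun i => r (i + 1), mem_stepSet.2 ⟨r 0, h0, hstep 0 (by simp)⟩,
        fun i hi => hstep (i + 1) (by simpa using hi), hr⟩

theorem mem_accepts_iff_exists_run {w : List α} :
    w ∈ M.accepts ↔ ∃ r : ℕ → σ, r 0 ∈ M.start ∧
      (∀ i (hi : i < w.length), r (i + 1) ∈ M.step (r i) w[i]) ∧ r w.length ∈ M.accept := by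
  simp only [mem_accepts, mem_evalFrom_iff_exists_run]
  constructor
  · rintro ⟨q, hq, r, h0, hstep, rfl⟩
    exact ⟨r, h0, hstep, hq⟩
  · rintro ⟨r, h0, hstep, hr⟩
    exact ⟨_, hr, r, h0, hstep, rfl⟩

theorem exists_mem_accepts_length_lt [Fintype σ] {w : List α} (hw : w ∈ M.accepts) :
    ∃ w' ∈ M.accepts, w'.length < Fintype.card σ := by
  induction hn : w.length using Nat.strong_induction_on generalizing w with
  | _ n ih =>
  by_cases hlt : n < Fintype.card σ
  · exact ⟨w, hw, hn ▸ hlt⟩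
  obtain ⟨q, hq, hqw⟩ := mem_accepts.1 hw
  -- `f i` is the state of an accepting run after reading `i` letters
  have hsplit : ∀ i : Fin (n + 1), ∃ s ∈ M.evalFrom M.start (w.take i),
      q ∈ M.evalFrom {s} (w.drop i) := fun i => by
    rw [← mem_evalFrom_iff_exists, ← evalFrom_append, List.take_append_drop]
    exact hqw
  choose f hf using hsplit
  have hcut : ∀ i j : Fin (n + 1), i < j → f i = f j →
      ∃ w' ∈ M.accepts, w'.length < Fintype.card σ := fun i j hij hfij => by
    refine ih _ ?_ (w := w.take i ++ w.drop j) ?_ rfl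
    · simp only [List.length_append, List.length_take, List.length_drop]
      omega
    · rw [mem_accepts, evalFrom_append]
      exact ⟨q, hq, mem_evalFrom_iff_exists.2 ⟨f i, (hf i).1, hfij ▸ (hf j).2⟩⟩
  obtain ⟨i, j, hij, hfij⟩ := Fintype.exists_ne_map_eq_of_card_lt f (by simp; omega)
  rcases lt_or_gt_of_ne hij with h | h
  · exact hcut i j h hfij
  · exact hcut j i h hfij.symm

end NFA

namespace LTL

variable {α : Type} {w : List α}

def subformulas : LTL α → Set (LTL α)
  | tt => {tt}
  | ff => {ff}
  | atom a => {atom a}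
  | .not χ => insert (.not χ) χ.subformulas
  | and χ₁ χ₂ => insert (and χ₁ χ₂) (χ₁.subformulas ∪ χ₂.subformulas)
  | or χ₁ χ₂ => insert (or χ₁ χ₂) (χ₁.subformulas ∪ χ₂.subformulas)
  | sinceOp χ₁ χ₂ => insert (sinceOp χ₁ χ₂) (χ₁.subformulas ∪ χ₂.subformulas)
  | untilOp χ₁ χ₂ => insert (untilOp χ₁ χ₂) (χ₁.subformulas ∪ χ₂.subformulas)

@[simp]
theorem self_mem_subformulas (φ : LTL α) : φ ∈ φ.subformulas := by
  cases φ <;> simp [subformulas]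

theorem subformulas_subset_of_mem {φ ψ : LTL α} (h : ψ ∈ φ.subformulas) :
    ψ.subformulas ⊆ φ.subformulas := by
  induction φ <;> simp only [subformulas, Set.mem_insert_iff, Set.mem_union,
    Set.mem_singleton_iff] at h <;>
    grind [subformulas, Set.subset_union_left, Set.subset_union_right]

theorem finite_subformulas (φ : LTL α) : φ.subformulas.Finite := by
  induction φ <;> simp [subformulas, *]

theorem ncard_subformulas_le (φ : LTL α) : φ.subformulas.ncard ≤ size φ := by
  induction φ with
  | tt | ff | atom => simp [subformulas, size]
  | not χ ih => exact (Set.ncard_insert_le _ _).trans (by simp [size, ih])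
  | and χ₁ χ₂ ih₁ ih₂ | or χ₁ χ₂ ih₁ ih₂ | sinceOp χ₁ χ₂ ih₁ ih₂ | untilOp χ₁ χ₂ ih₁ ih₂ =>
    refine (Set.ncard_insert_le _ _).trans ?_
    have := Set.ncard_union_le χ₁.subformulas χ₂.subformulas
    simp only [size]
    omega

theorem one_le_size (φ : LTL α) : 1 ≤ size φ := by
  cases φ <;> simp [size]

theorem sat_sinceOp_succ_iff {χ₁ χ₂ : LTL α} {i : ℕ} :
    Sat w (sinceOp χ₁ χ₂) (i + 1) ↔
      1 ≤ i ∧ (Sat w χ₂ i ∨ Sat w χ₁ i ∧ Sat w (sinceOp χ₁ χ₂) i) := by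
  simp only [Sat]
  constructor
  · rintro ⟨j, hj1, hji, h₂, h₁⟩
    refine ⟨by omega, ?_⟩
    rcases (Nat.lt_succ_iff.1 hji).eq_or_lt with rfl | hji
    · exact .inl h₂
    · exact .inr ⟨h₁ i hji i.lt_succ_self, j, hj1, hji, h₂, fun k hjk hki => h₁ k hjk (by omega)⟩
  · rintro ⟨hi, h₂ | ⟨h₁, j, hj1, hji, h₂, h₁'⟩⟩
    · exact ⟨i, hi, i.lt_succ_self, h₂, fun k _ _ => by omega⟩
    · refine ⟨j, hj1, by omega, h₂, fun k hjk hki => ?_⟩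
      rcases (Nat.lt_succ_iff.1 hki).eq_or_lt with rfl | hki
      · exact h₁
      · exact h₁' k hjk hki

theorem sat_untilOp_iff {χ₁ χ₂ : LTL α} {i : ℕ} :
    Sat w (untilOp χ₁ χ₂) i ↔
      i < w.length ∧ (Sat w χ₂ (i + 1) ∨ Sat w χ₁ (i + 1) ∧ Sat w (untilOp χ₁ χ₂) (i + 1)) := by
  simp only [Sat]
  constructor
  · rintro ⟨j, hij, hjn, h₂, h₁⟩
    refine ⟨by omega, ?_⟩
    rcases (Nat.succ_le_of_lt hij).eq_or_lt with rfl | hij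
    · exact .inl h₂
    · exact .inr ⟨h₁ (i + 1) i.lt_succ_self hij, j, hij, hjn, h₂,
        fun k hik hkj => h₁ k (by omega) hkj⟩
  · rintro ⟨hi, h₂ | ⟨h₁, j, hij, hjn, h₂, h₁'⟩⟩
    · exact ⟨i + 1, i.lt_succ_self, hi, h₂, fun k _ _ => by omega⟩
    · refine ⟨j, by omega, hjn, h₂, fun k hik hkj => ?_⟩
      rcases (Nat.succ_le_of_lt hik).eq_or_lt with rfl | hik
      · exact h₁
      · exact h₁' k hik hkj

/-- One-step unfolding of `ψ` at a position with letter `a`, given the sets of formulas holding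
there (`cur`) and at the neighbouring positions (`none` beyond the ends of the word). -/
def Unfold (prev : Option (Set (LTL α))) (a : Option α) (cur : Set (LTL α))
    (next : Option (Set (LTL α))) : LTL α → Prop
  | tt => True
  | ff => False
  | atom b => a = some b
  | .not χ => χ ∉ cur
  | and χ₁ χ₂ => χ₁ ∈ cur ∧ χ₂ ∈ cur
  | or χ₁ χ₂ => χ₁ ∈ cur ∨ χ₂ ∈ cur
  | sinceOp χ₁ χ₂ => ∃ p ∈ prev, χ₂ ∈ p ∨ χ₁ ∈ p ∧ sinceOp χ₁ χ₂ ∈ p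
  | untilOp χ₁ χ₂ => ∃ q ∈ next, χ₂ ∈ q ∨ χ₁ ∈ q ∧ untilOp χ₁ χ₂ ∈ q

structure IsHintikka (cl : Set (LTL α)) (w : List α) (v : ℕ → Option (Set (LTL α))) : Prop where
  isSome_iff : ∀ i, (v i).isSome ↔ 1 ≤ i ∧ i ≤ w.length
  mem_iff_unfold : ∀ i, ∀ s ∈ v i, ∀ ψ ∈ cl, ψ ∈ s ↔ Unfold (v (i - 1)) w[i - 1]? s (v (i + 1)) ψ

def truth (cl : Set (LTL α)) (w : List α) (i : ℕ) : Option (Set (LTL α)) :=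
  if 1 ≤ i ∧ i ≤ w.length then some {ψ ∈ cl | Sat w ψ i} else none

variable {cl : Set (LTL α)}

theorem isHintikka_truth (hcl : ∀ ψ ∈ cl, ψ.subformulas ⊆ cl) : IsHintikka cl w (truth cl w) where
  isSome_iff i := by simp only [truth]; split_ifs <;> simp <;> omega
  mem_iff_unfold i s hs ψ hψ := by
    simp only [truth, Option.mem_def, Option.ite_none_right_eq_some, Option.some.injEq] at hs
    obtain ⟨⟨hi1, hin⟩, rfl⟩ := hs
    obtain ⟨k, rfl⟩ := Nat.exists_eq_add_of_le' hi1
    cases ψ with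
    | tt | ff | atom => simp [Unfold, Sat, hψ]
    | not χ =>
      have h : χ ∈ cl := hcl _ hψ (by simp [subformulas])
      simp [Unfold, Sat, hψ, h]
    | and χ₁ χ₂ | or χ₁ χ₂ =>
      have h₁ : χ₁ ∈ cl := hcl _ hψ (by simp [subformulas])
      have h₂ : χ₂ ∈ cl := hcl _ hψ (by simp [subformulas])
      simp [Unfold, Sat, hψ, h₁, h₂]
    | sinceOp χ₁ χ₂ =>
      have h₁ : χ₁ ∈ cl := hcl _ hψ (by simp [subformulas])
      have h₂ : χ₂ ∈ cl := hcl _ hψ (by simp [subformulas])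
      simp only [Set.mem_sep_iff, hψ, true_and, Unfold, truth, sat_sinceOp_succ_iff]
      split_ifs <;> simp [h₁, h₂, hψ] <;> omega
    | untilOp χ₁ χ₂ =>
      have h₁ : χ₁ ∈ cl := hcl _ hψ (by simp [subformulas])
      have h₂ : χ₂ ∈ cl := hcl _ hψ (by simp [subformulas])
      simp only [Set.mem_sep_iff, hψ, true_and, Unfold, truth]
      rw [sat_untilOp_iff]
      split_ifs <;> simp [h₁, h₂, hψ] <;> omega

namespace IsHintikka

variable {v : ℕ → Option (Set (LTL α))}

theorem mem_Icc_of_mem (hv : IsHintikka cl w v) {i : ℕ} {s : Set (LTL α)} (hs : s ∈ v i) :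
    i ∈ Set.Icc 1 w.length :=
  (hv.isSome_iff i).1 (Option.isSome_of_mem hs)

theorem sinceOp_mem_iff_sat (hv : IsHintikka cl w v) {χ₁ χ₂ : LTL α} (hψ : sinceOp χ₁ χ₂ ∈ cl)
    (h₁ : ∀ i, ∀ s ∈ v i, χ₁ ∈ s ↔ Sat w χ₁ i) (h₂ : ∀ i, ∀ s ∈ v i, χ₂ ∈ s ↔ Sat w χ₂ i)
    {i : ℕ} {s : Set (LTL α)} (hs : s ∈ v i) : sinceOp χ₁ χ₂ ∈ s ↔ Sat w (sinceOp χ₁ χ₂) i := by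
  induction i generalizing s with
  | zero => exact absurd (hv.mem_Icc_of_mem hs).1 (by omega)
  | succ j ih =>
    obtain ⟨-, hj⟩ := hv.mem_Icc_of_mem hs
    rw [hv.mem_iff_unfold _ s hs _ hψ, sat_sinceOp_succ_iff, Nat.add_sub_cancel]
    cases hp : v j with
    | none =>
      have : ¬ 1 ≤ j := fun h => by simpa [hp] using (hv.isSome_iff j).2 ⟨h, by omega⟩
      simp [Unfold, this]
    | some p =>
      have hp : p ∈ v j := hp
      simp [Unfold, (hv.mem_Icc_of_mem hp).1, h₁ j p hp, h₂ j p hp, ih hp]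

theorem untilOp_mem_iff_sat (hv : IsHintikka cl w v) {χ₁ χ₂ : LTL α} (hψ : untilOp χ₁ χ₂ ∈ cl)
    (h₁ : ∀ i, ∀ s ∈ v i, χ₁ ∈ s ↔ Sat w χ₁ i) (h₂ : ∀ i, ∀ s ∈ v i, χ₂ ∈ s ↔ Sat w χ₂ i)
    {i : ℕ} {s : Set (LTL α)} (hs : s ∈ v i) : untilOp χ₁ χ₂ ∈ s ↔ Sat w (untilOp χ₁ χ₂) i := by
  suffices ∀ k i, w.length < i + k → ∀ s ∈ v i,
      (untilOp χ₁ χ₂ ∈ s ↔ Sat w (untilOp χ₁ χ₂) i) from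
    this (w.length + 1) i (by omega) s hs
  intro k
  induction k with
  | zero => exact fun i hi s hs => absurd (hv.mem_Icc_of_mem hs).2 (by omega)
  | succ k ih =>
    intro i hik s hs
    rw [hv.mem_iff_unfold _ s hs _ hψ, sat_untilOp_iff]
    cases hq : v (i + 1) with
    | none =>
      have : ¬ i < w.length := fun h => by
        simpa [hq] using (hv.isSome_iff (i + 1)).2 ⟨by omega, h⟩
      simp [Unfold, this]
    | some q =>
      have hq : q ∈ v (i + 1) := hq
      have : i < w.length := (hv.mem_Icc_of_mem hq).2
      simp [Unfold, this, h₁ _ q hq, h₂ _ q hq, ih (i + 1) (by omega) q hq]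

theorem mem_iff_sat (hv : IsHintikka cl w v) (hcl : ∀ ψ ∈ cl, ψ.subformulas ⊆ cl) {ψ : LTL α}
    (hψ : ψ ∈ cl) {i : ℕ} {s : Set (LTL α)} (hs : s ∈ v i) : ψ ∈ s ↔ Sat w ψ i := by
  induction ψ generalizing i s with
  | tt | ff | atom => simp [hv.mem_iff_unfold i s hs _ hψ, Unfold, Sat]
  | not χ ih =>
    have h : χ ∈ cl := hcl _ hψ (by simp [subformulas])
    simp [hv.mem_iff_unfold i s hs _ hψ, Unfold, Sat, ih h hs]
  | and χ₁ χ₂ ih₁ ih₂ | or χ₁ χ₂ ih₁ ih₂ =>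
    have h₁ : χ₁ ∈ cl := hcl _ hψ (by simp [subformulas])
    have h₂ : χ₂ ∈ cl := hcl _ hψ (by simp [subformulas])
    simp [hv.mem_iff_unfold i s hs _ hψ, Unfold, Sat, ih₁ h₁ hs, ih₂ h₂ hs]
  | sinceOp χ₁ χ₂ ih₁ ih₂ =>
    have h₁ : χ₁ ∈ cl := hcl _ hψ (by simp [subformulas])
    have h₂ : χ₂ ∈ cl := hcl _ hψ (by simp [subformulas])
    exact hv.sinceOp_mem_iff_sat hψ (fun _ _ => ih₁ h₁) (fun _ _ => ih₂ h₂) hs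
  | untilOp χ₁ χ₂ ih₁ ih₂ =>
    have h₁ : χ₁ ∈ cl := hcl _ hψ (by simp [subformulas])
    have h₂ : χ₂ ∈ cl := hcl _ hψ (by simp [subformulas])
    exact hv.untilOp_mem_iff_sat hψ (fun _ _ => ih₁ h₁) (fun _ _ => ih₂ h₂) hs

end IsHintikka

/-- A state is the window `(v i, v (i + 1))` of guesses at two consecutive positions; reading the
letter of position `i + 1`, the automaton checks the guess `v (i + 1)` against it and against its
neighbours. The empty word has no positions, so its acceptance is decided by `Sat [] φ 1`. -/
def closureNFA (φ : LTL α) : NFA α (Option (𝒫 φ.subformulas) × Option (𝒫 φ.subformulas)) where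
  step x a := {y | y.1 = x.2 ∧ ∃ s ∈ x.2, ∀ ψ ∈ φ.subformulas,
    ψ ∈ (s : Set (LTL α)) ↔ Unfold (x.1.map (↑)) (some a) s (y.2.map (↑)) ψ}
  start := {x | x.1 = none ∧ (x.2 = none → Sat [] φ 1) ∧ ∀ s ∈ x.2, φ ∈ (s : Set (LTL α))}
  accept := {x | x.2 = none}

variable {φ : LTL α}

theorem mem_accepts_closureNFA_of_sat (h : Sat w φ 1) : w ∈ (closureNFA φ).accepts := by
  let T : ℕ → Option (𝒫 φ.subformulas) := fun j =>
    if 1 ≤ j ∧ j ≤ w.length then some ⟨{ψ ∈ φ.subformulas | Sat w ψ j}, Set.sep_subset _ _⟩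
    else none
  have hT : ∀ j, (T j).map (↑) = truth φ.subformulas w j := fun j => by
    simp only [T, truth]
    split_ifs <;> rfl
  have hv := isHintikka_truth (w := w) fun _ => subformulas_subset_of_mem (φ := φ)
  refine NFA.mem_accepts_iff_exists_run.2 ⟨fun j => (T j, T (j + 1)), ⟨by simp [T], ?_, ?_⟩,
    fun i hi => ⟨rfl, ?_⟩, by simp [closureNFA, T]⟩
  · intro h1
    have : w = [] := by simpa [T] using h1
    exact this ▸ h
  · simp [T, h]
  · refine ⟨_, (if_pos ⟨by omega, hi⟩ : T (i + 1) = _), fun ψ hψ => ?_⟩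
    rw [hT, hT]
    simpa [hi] using hv.mem_iff_unfold (i + 1) _ (if_pos ⟨by omega, hi⟩) ψ hψ

theorem exists_isHintikka_of_mem_accepts_closureNFA (hw : w ∈ (closureNFA φ).accepts)
    (hne : w ≠ []) : ∃ v, IsHintikka φ.subformulas w v ∧ ∃ s ∈ v 1, φ ∈ s := by
  obtain ⟨r, ⟨h0, -, hφ⟩, hstep, hacc⟩ := NFA.mem_accepts_iff_exists_run.1 hw
  -- `r` is unconstrained past the end of the word
  let u : ℕ → Option (𝒫 φ.subformulas) := fun j => if j ≤ w.length then (r j).1 else none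
  have hr : ∀ i ≤ w.length, r i = (u i, u (i + 1)) := fun i hi => by
    refine Prod.ext (by simp [u, hi]) ?_
    rcases hi.lt_or_eq with hi | rfl
    · simp [u, show i + 1 ≤ w.length by omega, (hstep i hi).1]
    · simpa [u, closureNFA] using hacc
  have hu : ∀ i (hi : i < w.length), ∃ s ∈ u (i + 1), ∀ ψ ∈ φ.subformulas,
      ψ ∈ (s : Set (LTL α)) ↔ Unfold ((u i).map (↑)) (some w[i]) s ((u (i + 2)).map (↑)) ψ :=
    fun i hi => by simpa [hr i hi.le, hr (i + 1) hi] using (hstep i hi).2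
  have hu_isSome : ∀ j, (u j).isSome ↔ 1 ≤ j ∧ j ≤ w.length := fun j => by
    refine ⟨fun h => ⟨Nat.one_le_iff_ne_zero.2 ?_, by_contra fun hj => by simp [u, hj] at h⟩,
      fun ⟨h1, hj⟩ => ?_⟩
    · rintro rfl
      simp [u, h0] at h
    · obtain ⟨k, rfl⟩ := Nat.exists_eq_add_of_le' h1
      obtain ⟨s, hs, -⟩ := hu k hj
      exact Option.isSome_of_mem hs
  refine ⟨fun j => (u j).map (↑), ⟨fun j => by simpa using hu_isSome j, fun j s hs ψ hψ => ?_⟩, ?_⟩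
  · obtain ⟨t, ht, rfl⟩ := Option.mem_map.1 hs
    obtain ⟨h1, hj⟩ := (hu_isSome j).1 (Option.isSome_of_mem ht)
    obtain ⟨k, rfl⟩ := Nat.exists_eq_add_of_le' h1
    obtain ⟨t', ht', hunf⟩ := hu k hj
    obtain rfl := Option.mem_unique ht ht'
    have hk : k < w.length := hj
    simp only [Nat.add_sub_cancel, List.getElem?_eq_getElem hk]
    exact hunf ψ hψ
  · obtain ⟨s, hs, -⟩ := hu 0 (List.length_pos_iff.2 hne)
    exact ⟨s, Option.mem_map_of_mem _ hs, hφ s (by rwa [hr 0 (Nat.zero_le _)])⟩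

theorem sat_of_mem_accepts_closureNFA (hw : w ∈ (closureNFA φ).accepts) : Sat w φ 1 := by
  cases w with
  | nil =>
    obtain ⟨x, hacc, hstart⟩ := NFA.mem_accepts.1 hw
    exact hstart.2.1 hacc
  | cons a w =>
    obtain ⟨v, hv, s, hs, hφ⟩ :=
      exists_isHintikka_of_mem_accepts_closureNFA hw (List.cons_ne_nil a w)
    exact (hv.mem_iff_sat (fun _ => subformulas_subset_of_mem) (self_mem_subformulas φ) hs).1 hφ

theorem mem_accepts_closureNFA_iff :
    w ∈ (closureNFA φ).accepts ↔ Sat w φ 1 :=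
  ⟨sat_of_mem_accepts_closureNFA, mem_accepts_closureNFA_of_sat⟩

instance (φ : LTL α) : Finite (𝒫 φ.subformulas) := (finite_subformulas φ).powerset.to_subtype

theorem natCard_closureNFA_states_le (φ : LTL α) :
    Nat.card (Option (𝒫 φ.subformulas) × Option (𝒫 φ.subformulas)) ≤ 2 ^ (4 * size φ) := by
  have hk := ncard_subformulas_le φ
  have hs := one_le_size φ
  have h : 2 ^ φ.subformulas.ncard + 1 ≤ 2 ^ (2 * size φ) :=
    calc 2 ^ φ.subformulas.ncard + 1 ≤ 2 ^ size φ + 2 ^ size φ :=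
          add_le_add (Nat.pow_le_pow_right two_pos hk) Nat.one_le_two_pow
      _ = 2 ^ (size φ + 1) := by ring
      _ ≤ 2 ^ (2 * size φ) := Nat.pow_le_pow_right two_pos (by omega)
  calc Nat.card (Option (𝒫 φ.subformulas) × Option (𝒫 φ.subformulas))
      = (2 ^ φ.subformulas.ncard + 1) * (2 ^ φ.subformulas.ncard + 1) := by
        rw [Nat.card_prod, Finite.card_option, Nat.card_coe_set_eq,
          Set.ncard_powerset _ (finite_subformulas φ)]
    _ ≤ 2 ^ (2 * size φ) * 2 ^ (2 * size φ) := Nat.mul_le_mul h h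
    _ = 2 ^ (4 * size φ) := by ring

end LTL

/-- For every LTL formula `φ` there is an NFA with at most `2^{O(|φ|)}`
states recognizing exactly the words satisfying `φ` at position 1;
consequently, a satisfiable formula has a model of length at most
`2^{O(|φ|)}`. -/
theorem ltl_to_nfa_small_model :
    ∃ c : ℕ, ∀ (α : Type) (φ : LTL α),
      (∃ (σ : Type) (_ : Fintype σ) (A : NFA α σ),
        Fintype.card σ ≤ 2 ^ (c * size φ) ∧
        ∀ w : List α, w ∈ A.accepts ↔ Sat w φ 1) ∧
      ((∃ w : List α, Sat w φ 1) →
        ∃ w : List α, Sat w φ 1 ∧ w.length ≤ 2 ^ (c * size φ)) := by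
  refine ⟨4, fun α φ => ?_⟩
  let := Fintype.ofFinite (Option (𝒫 φ.subformulas) × Option (𝒫 φ.subformulas))
  have hcard : Fintype.card (Option (𝒫 φ.subformulas) × Option (𝒫 φ.subformulas)) ≤
      2 ^ (4 * size φ) :=
    Fintype.card_eq_nat_card.trans_le (LTL.natCard_closureNFA_states_le φ)
  refine ⟨⟨_, _, φ.closureNFA, hcard, fun w => LTL.mem_accepts_closureNFA_iff⟩, fun ⟨w, hw⟩ => ?_⟩
  obtain ⟨w', hw', hlen⟩ := NFA.exists_mem_accepts_length_lt (LTL.mem_accepts_closureNFA_iff.2 hw)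
  exact ⟨w', LTL.mem_accepts_closureNFA_iff.1 hw', hlen.le.trans hcard⟩
end

section
/- Let w = a₁⋯aₙ be a finite word and φ₁, φ₂ LTL formulas. Then w,i ⊨ φ₁ S φ₂ holds if and only if there exists j with 1 ≤ j < i such that w,j ⊨ ¬φ₁ ∨ φ₂, and for the maximal such j one has w,j ⊨ φ₂. -/
/-!
The rightmost position `m < i` where `¬φ₁ ∨ φ₂` holds sees `φ₁` everywhere strictly between
`m` and `i`, so it witnesses `φ₁ S φ₂` as soon as `φ₂` holds there. Conversely, if `j` witnesses
`φ₁ S φ₂`, then `φ₂` at `j` puts `j` among the candidates, so `j ≤ m`; and `m = j` or else `φ₁`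
holds at `m`, so that `¬φ₁ ∨ φ₂` at `m` forces `φ₂` there.
-/

theorem Nat.exists_greatest_lt_of_mem {R : ℕ → Prop} {j i : ℕ} (hj : R j) (hji : j < i) :
    ∃ m, j ≤ m ∧ m < i ∧ R m ∧ ∀ k, k < i → R k → k ≤ m := by
  classical
  refine ⟨Nat.findGreatest R (i - 1), Nat.le_findGreatest (by omega) hj, ?_,
    Nat.findGreatest_spec (by omega) hj, fun k hki hk => Nat.le_findGreatest (by omega) hk⟩
  have := Nat.findGreatest_le (P := R) (i - 1)
  omega

section Since

variable {P Q : ℕ → Prop} {i : ℕ}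

theorem since_of_rightmost {j : ℕ} (hj : 1 ≤ j) (hji : j < i) (hQ : Q j)
    (hmax : ∀ k, 1 ≤ k → k < i → ¬P k ∨ Q k → k ≤ j) :
    ∃ j, 1 ≤ j ∧ j < i ∧ Q j ∧ ∀ k, j < k → k < i → P k := by
  refine ⟨j, hj, hji, hQ, fun k hjk hki => ?_⟩
  by_contra hP
  have := hmax k (by omega) hki (Or.inl hP)
  omega

theorem rightmost_of_since {j : ℕ} (hj : 1 ≤ j) (hji : j < i) (hQ : Q j)
    (hP : ∀ k, j < k → k < i → P k) :
    ∃ m, (1 ≤ m ∧ m < i ∧ (¬P m ∨ Q m) ∧ ∀ k, 1 ≤ k → k < i → ¬P k ∨ Q k → k ≤ m) ∧ Q m := by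
  obtain ⟨m, hjm, hmi, ⟨hm, hPQm⟩, hmax⟩ :=
    Nat.exists_greatest_lt_of_mem (R := fun k => 1 ≤ k ∧ (¬P k ∨ Q k)) ⟨hj, Or.inr hQ⟩ hji
  refine ⟨m, ⟨hm, hmi, hPQm, fun k hk hki hPQk => hmax k hki ⟨hk, hPQk⟩⟩, ?_⟩
  rcases hjm.eq_or_lt with rfl | hjm
  · exact hQ
  · exact hPQm.resolve_left (not_not_intro (hP m hjm hmi))

theorem since_iff_rightmost :
    (∃ j, 1 ≤ j ∧ j < i ∧ Q j ∧ ∀ k, j < k → k < i → P k) ↔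
      ∃ j, (1 ≤ j ∧ j < i ∧ (¬P j ∨ Q j) ∧ ∀ k, 1 ≤ k → k < i → ¬P k ∨ Q k → k ≤ j) ∧ Q j := by
  constructor
  · rintro ⟨j, hj, hji, hQ, hP⟩
    exact rightmost_of_since hj hji hQ hP
  · rintro ⟨j, ⟨hj, hji, -, hmax⟩, hQ⟩
    exact since_of_rightmost hj hji hQ hmax

end Since

theorem since_via_rightmost_general (α : Type) (φ₁ φ₂ : LTL α) (w : List α) (i : ℕ) :
    Sat w (LTL.sinceOp φ₁ φ₂) i ↔
      ∃ j, (1 ≤ j ∧ j < i ∧ Sat w (LTL.or (LTL.not φ₁) φ₂) j ∧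
          ∀ k, 1 ≤ k → k < i → Sat w (LTL.or (LTL.not φ₁) φ₂) k → k ≤ j) ∧
        Sat w φ₂ j :=
  since_iff_rightmost

/-- Correctness of simulating strict `since` by a rightmost
(strictly-future-masked) unique-hard-attention layer:
`w,i ⊨ φ₁ S φ₂` iff there is a position `1 ≤ j < i` where `¬φ₁ ∨ φ₂`
holds, and at the maximal such `j` the formula `φ₂` holds. -/
theorem since_via_rightmost (α : Type) (φ₁ φ₂ : LTL α) (w : List α) (i : ℕ)
    (hi : 1 ≤ i) (hin : i ≤ w.length) :
    Sat w (LTL.sinceOp φ₁ φ₂) i ↔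
      ∃ j, (1 ≤ j ∧ j < i ∧ Sat w (LTL.or (LTL.not φ₁) φ₂) j ∧
          ∀ k, 1 ≤ k → k < i → Sat w (LTL.or (LTL.not φ₁) φ₂) k → k ≤ j) ∧
        Sat w φ₂ j :=
  since_via_rightmost_general α φ₁ φ₂ w i
end

section
/- Let w = a₁⋯aₙ be a finite word and φ₁, φ₂ LTL formulas. Then w,i ⊨ φ₁ U φ₂ (strict until) holds if and only if there exists j with i < j ≤ n such that w,j ⊨ ¬φ₁ ∨ φ₂, and for the minimal such j one has w,j ⊨ φ₂. -/
/-! All positions between `i` and the first later position where `φ₁` fails or `φ₂` holds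
satisfy `φ₁`. A `φ₂`-witness `j` of `φ₁ U φ₂` bounds this first stop from above, and a stop
strictly before `j` satisfies `φ₁`, so in either case the first stop satisfies `φ₂`. -/

theorem exists_until_iff_first_stop {P Q : ℕ → Prop} {i n : ℕ} :
    (∃ j, i < j ∧ j ≤ n ∧ Q j ∧ ∀ k, i < k → k < j → P k) ↔
      ∃ j, (i < j ∧ j ≤ n ∧ (¬P j ∨ Q j) ∧
          ∀ k, i < k → k ≤ n → (¬P k ∨ Q k) → j ≤ k) ∧ Q j := by
  classical
  constructor
  · rintro ⟨j, hij, hjn, hQ, hP⟩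
    have hstops : ∃ m, i < m ∧ m ≤ n ∧ (¬P m ∨ Q m) := ⟨j, hij, hjn, .inr hQ⟩
    obtain ⟨him, hmn, hstop⟩ := Nat.find_spec hstops
    have hleast : ∀ k, i < k → k ≤ n → (¬P k ∨ Q k) → Nat.find hstops ≤ k :=
      fun k hik hkn hk => Nat.find_min' hstops ⟨hik, hkn, hk⟩
    refine ⟨_, ⟨him, hmn, hstop, hleast⟩, ?_⟩
    rcases (hleast j hij hjn (.inr hQ)).lt_or_eq with hlt | heq
    · exact hstop.resolve_left (not_not_intro (hP _ him hlt))
    · exact heq ▸ hQ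
  · rintro ⟨j, ⟨hij, hjn, -, hleast⟩, hQ⟩
    refine ⟨j, hij, hjn, hQ, fun k hik hkj => by_contra fun hPk => ?_⟩
    exact (hleast k hik (hkj.le.trans hjn) (.inl hPk)).not_gt hkj

theorem until_via_leftmost_general (α : Type) (φ₁ φ₂ : LTL α) (w : List α) (i : ℕ) :
    Sat w (LTL.untilOp φ₁ φ₂) i ↔
      ∃ j, (i < j ∧ j ≤ w.length ∧ Sat w (LTL.or (LTL.not φ₁) φ₂) j ∧
          ∀ k, i < k → k ≤ w.length → Sat w (LTL.or (LTL.not φ₁) φ₂) k → j ≤ k) ∧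
        Sat w φ₂ j :=
  exists_until_iff_first_stop

/-- Correctness of simulating strict `until` by a leftmost
(strictly-past-masked) unique-hard-attention layer:
`w,i ⊨ φ₁ U φ₂` iff there is a position `i < j ≤ |w|` where `¬φ₁ ∨ φ₂`
holds, and at the minimal such `j` the formula `φ₂` holds. -/
theorem until_via_leftmost (α : Type) (φ₁ φ₂ : LTL α) (w : List α) (i : ℕ)
    (hi : 1 ≤ i) (hin : i ≤ w.length) :
    Sat w (LTL.untilOp φ₁ φ₂) i ↔
      ∃ j, (i < j ∧ j ≤ w.length ∧ Sat w (LTL.or (LTL.not φ₁) φ₂) j ∧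
          ∀ k, i < k → k ≤ w.length → Sat w (LTL.or (LTL.not φ₁) φ₂) k → j ≤ k) ∧
        Sat w φ₂ j :=
  until_via_leftmost_general α φ₁ φ₂ w i
end
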